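/- arXiv:1112.6376 — 3 statements merged into one kernel-verified Lean document; each statement's English description precedes it below -/
import Mathlib

section
/- Let a_1,...,a_k be distinct nonzero complex numbers, b_1,...,b_l distinct nonzero complex numbers, p_1,...,p_k positive integers, m_1,...,m_l positive integers, and c a complex number. If ∑_{s=1}^k p_s a_s^r = c · ∑_{s=1}^l m_s b_s^r for all positive integers r, then k = l, and after a permutation a_s = b_s for all s, p_s = c·m_s for all s, and c is a positive rational number. -/
open Finset

/-- Vandermonde-type lemma: if `∑ w i * x i ^ r = 0` for all `0 < r`, with
`x` injective and nonzero, then all `w i = 0`. -/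
lemma vand_zero {n : ℕ} (x : Fin n → ℂ) (hx : Function.Injective x)
    (hx0 : ∀ i, x i ≠ 0) (w : Fin n → ℂ)
    (h : ∀ r : ℕ, 0 < r → ∑ i, w i * x i ^ r = 0) : ∀ i, w i = 0 := by
  have hdet : (Matrix.vandermonde x).det ≠ 0 := by
    rw [Matrix.det_vandermonde]
    refine Finset.prod_ne_zero_iff.2 fun i _ => Finset.prod_ne_zero_iff.2 fun j hj => ?_
    have hij : i ≠ j := fun h' => by rw [h'] at hj; exact lt_irrefl j (Finset.mem_Ioi.1 hj)
    exact sub_ne_zero.2 fun hxy => hij (hx hxy.symm)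
  have hv : Matrix.vecMul (fun i => w i * x i) (Matrix.vandermonde x) = 0 := by
    funext j
    have := h (j + 1) (Nat.succ_pos j)
    simpa [Matrix.vecMul, Matrix.vandermonde, dotProduct, pow_succ, mul_comm,
      mul_assoc, mul_left_comm] using this
  have hz := Matrix.eq_zero_of_vecMul_eq_zero hdet hv
  intro i
  have := congrFun hz i
  simp only [Pi.zero_apply] at this
  rcases mul_eq_zero.1 this with h' | h'
  · exact h'
  · exact absurd h' (hx0 i)

/-- Finset version. -/
lemma vand_zero_finset (T : Finset ℂ) (h0 : (0:ℂ) ∉ T) (w : ℂ → ℂ)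
    (h : ∀ r : ℕ, 0 < r → ∑ z ∈ T, w z * z ^ r = 0) : ∀ z ∈ T, w z = 0 := by
  classical
  set e := T.equivFin with he
  set x : Fin T.card → ℂ := fun i => (e.symm i : ℂ) with hxdef
  have hxinj : Function.Injective x := fun i j hij =>
    e.symm.injective (Subtype.ext hij)
  have hx0 : ∀ i, x i ≠ 0 := fun i hi => h0 (hi ▸ (e.symm i).2)
  have hTim : T = Finset.image x Finset.univ := by
    ext z
    simp only [Finset.mem_image, Finset.mem_univ, true_and]
    constructor
    · intro hz; exact ⟨e ⟨z, hz⟩, by simp [x]⟩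
    · rintro ⟨i, rfl⟩; exact (e.symm i).2
  have hsum : ∀ r : ℕ, 0 < r → ∑ i, (w ∘ x) i * x i ^ r = 0 := by
    intro r hr
    rw [← h r hr]
    conv_rhs => rw [hTim]
    rw [Finset.sum_image (fun i _ j _ hij => hxinj hij)]
    rfl
  have hzero := vand_zero x hxinj hx0 (w ∘ x) hsum
  intro z hz
  have := hzero (e ⟨z, hz⟩)
  simpa [x] using this

/-- if two power-sum expressions with distinct nonzero bases and
positive integer coefficients agree (up to scalar `c`) for every positive
exponent `r`, then the families of bases coincide up to permutation, the
coefficients are proportional with ratio `c`, and `c` is a positive rational. -/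
theorem stmt_1 (k l : ℕ) (hk : 0 < k) (a : Fin k → ℂ) (b : Fin l → ℂ)
    (p : Fin k → ℕ) (m : Fin l → ℕ) (c : ℂ)
    (ha0 : ∀ s, a s ≠ 0) (hb0 : ∀ s, b s ≠ 0)
    (hainj : Function.Injective a) (hbinj : Function.Injective b)
    (hp : ∀ s, 0 < p s) (hm : ∀ s, 0 < m s)
    (heq : ∀ r : ℕ, 0 < r →
      ∑ s, (p s : ℂ) * (a s) ^ r = c * ∑ s, (m s : ℂ) * (b s) ^ r) :
    k = l ∧ ∃ σ : Fin k ≃ Fin l,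
      (∀ s, a s = b (σ s)) ∧ (∀ s, (p s : ℂ) = c * (m (σ s) : ℂ)) ∧
      ∃ cq : ℚ, 0 < cq ∧ c = (cq : ℂ) := by
  classical
  set T : Finset ℂ := Finset.image a Finset.univ ∪ Finset.image b Finset.univ with hT
  have h0T : (0:ℂ) ∉ T := by
    simp only [hT, Finset.mem_union, Finset.mem_image, Finset.mem_univ, true_and]
    rintro (⟨s, hs⟩ | ⟨s, hs⟩)
    · exact ha0 s hs
    · exact hb0 s hs
  set pc : ℂ → ℂ := fun z => ∑ s, if a s = z then (p s : ℂ) else 0 with hpc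
  set mc : ℂ → ℂ := fun z => ∑ s, if b s = z then (m s : ℂ) else 0 with hmc
  have hpca : ∀ s, pc (a s) = (p s : ℂ) := by
    intro s
    rw [hpc]
    simp only
    rw [Finset.sum_eq_single s]
    · simp
    · intro t _ hts; rw [if_neg (fun h => hts (hainj h))]
    · simp
  have hmcb : ∀ s, mc (b s) = (m s : ℂ) := by
    intro s
    rw [hmc]
    simp only
    rw [Finset.sum_eq_single s]
    · simp
    · intro t _ hts; rw [if_neg (fun h => hts (hbinj h))]
    · simp
  have hpc0 : ∀ z, (∀ s, a s ≠ z) → pc z = 0 := by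
    intro z hz; rw [hpc]; simp only
    exact Finset.sum_eq_zero fun s _ => if_neg (hz s)
  have hmc0 : ∀ z, (∀ s, b s ≠ z) → mc z = 0 := by
    intro z hz; rw [hmc]; simp only
    exact Finset.sum_eq_zero fun s _ => if_neg (hz s)
  have hsump : ∀ r : ℕ, ∑ z ∈ T, pc z * z ^ r = ∑ s, (p s : ℂ) * a s ^ r := by
    intro r
    rw [← Finset.sum_subset (Finset.subset_union_left :
        Finset.image a Finset.univ ⊆ T)
      (fun z _ hz => by
        rw [hpc0 z, zero_mul]
        intro s hs
        exact hz (Finset.mem_image.2 ⟨s, Finset.mem_univ s, hs⟩))]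
    rw [Finset.sum_image (fun i _ j _ hij => hainj hij)]
    exact Finset.sum_congr rfl fun s _ => by rw [hpca]
  have hsumm : ∀ r : ℕ, ∑ z ∈ T, mc z * z ^ r = ∑ s, (m s : ℂ) * b s ^ r := by
    intro r
    rw [← Finset.sum_subset (Finset.subset_union_right :
        Finset.image b Finset.univ ⊆ T)
      (fun z _ hz => by
        rw [hmc0 z, zero_mul]
        intro s hs
        exact hz (Finset.mem_image.2 ⟨s, Finset.mem_univ s, hs⟩))]
    rw [Finset.sum_image (fun i _ j _ hij => hbinj hij)]
    exact Finset.sum_congr rfl fun s _ => by rw [hmcb]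
  have hzero : ∀ z ∈ T, pc z - c * mc z = 0 := by
    apply vand_zero_finset T h0T
    intro r hr
    have : ∑ z ∈ T, (pc z - c * mc z) * z ^ r
        = ∑ z ∈ T, pc z * z ^ r - c * ∑ z ∈ T, mc z * z ^ r := by
      rw [Finset.mul_sum, ← Finset.sum_sub_distrib]
      exact Finset.sum_congr rfl fun z _ => by ring
    rw [this, hsump, hsumm, heq r hr, sub_self]
  have hmain : ∀ z ∈ T, pc z = c * mc z := fun z hz =>
    sub_eq_zero.1 (hzero z hz)
  have haT : ∀ s, a s ∈ T := fun s => Finset.mem_union_left _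
    (Finset.mem_image.2 ⟨s, Finset.mem_univ s, rfl⟩)
  have hbT : ∀ s, b s ∈ T := fun s => Finset.mem_union_right _
    (Finset.mem_image.2 ⟨s, Finset.mem_univ s, rfl⟩)
  -- for each s, there is t with b t = a s
  have hc0 : c ≠ 0 := by
    intro hc
    have := hmain (a ⟨0, hk⟩) (haT _)
    rw [hpca, hc, zero_mul] at this
    exact (Nat.cast_ne_zero.2 (hp ⟨0, hk⟩).ne') this
  have hex : ∀ s : Fin k, ∃ t : Fin l, b t = a s := by
    intro s
    by_contra h
    push_neg at h
    have := hmain (a s) (haT s)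
    rw [hpca, hmc0 _ h, mul_zero] at this
    exact (Nat.cast_ne_zero.2 (hp s).ne') this
  choose σ hσ using hex
  have hpeq : ∀ s, (p s : ℂ) = c * (m (σ s) : ℂ) := by
    intro s
    have := hmain (a s) (haT s)
    rw [hpca] at this
    rw [this, ← hσ s, hmcb]
  have hσinj : Function.Injective σ := by
    intro s s' h
    apply hainj
    rw [← hσ s, ← hσ s', h]
  have hσsurj : Function.Surjective σ := by
    intro t
    have := hmain (b t) (hbT t)
    rw [hmcb] at this
    have hne : pc (b t) ≠ 0 := by
      rw [this]
      exact mul_ne_zero hc0 (Nat.cast_ne_zero.2 (hm t).ne')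
    have : ∃ s : Fin k, a s = b t := by
      by_contra h
      push_neg at h
      exact hne (hpc0 _ h)
    obtain ⟨s, hs⟩ := this
    exact ⟨s, hbinj (by rw [hσ s, hs])⟩
  have hbij : Function.Bijective σ := ⟨hσinj, hσsurj⟩
  set e : Fin k ≃ Fin l := Equiv.ofBijective σ hbij with he
  have hkl : k = l := by
    have := Fintype.card_congr e
    simpa using this
  refine ⟨hkl, e, fun s => (hσ s).symm, hpeq, ?_⟩
  -- c is a positive rational
  set s0 : Fin k := ⟨0, hk⟩
  refine ⟨(p s0 : ℚ) / (m (σ s0) : ℚ), ?_, ?_⟩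
  · exact div_pos (by exact_mod_cast hp s0) (by exact_mod_cast hm (σ s0))
  · have h1 := hpeq s0
    have hm0 : ((m (σ s0) : ℂ)) ≠ 0 := Nat.cast_ne_zero.2 (hm (σ s0)).ne'
    have hcast : (((p s0 : ℚ) / (m (σ s0) : ℚ) : ℚ) : ℂ)
        = (p s0 : ℂ) / (m (σ s0) : ℂ) := by push_cast; ring
    rw [hcast, eq_div_iff hm0]
    exact h1.symm
end

section
/- Let z_1, z_n, z' be complex numbers, q ∈ ℂ^× not a root of unity, and let A, M be integers with 0 < A ≤ M (playing the roles of −a_{n,n−1} and m_n). If −z_1 [rA] q^{r(A−M)} + z_n [rM] = z' q^{rA} [r(M−A)] holds for all nonzero integers r, where [k] = (q^k − q^{−k})/(q − q^{−1}), then z_1 = z_n = z'. -/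
/-!
Multiplying the identity by `q - q⁻¹` turns it into
`(z_n - z') u^r + (z₁ - z_n) v^r + (z' - z₁) w^r = 0` with `u = q^M`, `v = q^{-M}`,
`w = q^{2A-M}`. The coefficients sum to zero, so together with `r = 1, 2` this is a
Vandermonde system in the three numbers `u, v, w`, which are pairwise distinct because
`q` is not a root of unity and `M, -M, 2A - M` are pairwise distinct for `0 < A < M`.
Hence all coefficients vanish.
-/

/-- The quantum integer `[k] = (q^k - q^{-k})/(q - q^{-1})`. -/
noncomputable def qint (q : ℂ) (k : ℤ) : ℂ := (q ^ k - q ^ (-k)) / (q - q⁻¹)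

theorem injective_zpow_of_not_isOfFinOrder₀ {G₀ : Type*} [GroupWithZero G₀] {q : G₀}
    (hq : q ≠ 0) (hfin : ¬IsOfFinOrder q) : Function.Injective fun n : ℤ => q ^ n := by
  intro a b hab
  have hu : ¬IsOfFinOrder (Units.mk0 q hq) := by rwa [← Units.isOfFinOrder_val]
  refine injective_zpow_iff_not_isOfFinOrder.mpr hu (Units.val_injective ?_)
  simpa only [Units.val_zpow_eq_zpow_val, Units.val_mk0] using hab

theorem eq_zero_of_weighted_power_sums_eq_zero {R : Type*} [CommRing R] [IsDomain R]
    {a b c u v w : R} (huv : u ≠ v) (huw : u ≠ w)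
    (h₀ : a + b + c = 0) (h₁ : a * u + b * v + c * w = 0)
    (h₂ : a * u ^ 2 + b * v ^ 2 + c * w ^ 2 = 0) : a = 0 := by
  have h : a * ((u - v) * (u - w)) = 0 := by
    linear_combination h₂ - (v + w) * h₁ + v * w * h₀
  exact (mul_eq_zero.mp h).resolve_right
    (mul_ne_zero (sub_ne_zero.mpr huv) (sub_ne_zero.mpr huw))

theorem sum_zpow_eq_zero_of_qint_identity {q : ℂ} (hq : q ≠ 0) (hq2 : q ^ 2 ≠ 1)
    {a m : ℤ} {z₁ zn z' : ℂ}
    (h : -z₁ * qint q a * q ^ (a - m) + zn * qint q m = z' * q ^ a * qint q (m - a)) :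
    (zn - z') * q ^ m + (z₁ - zn) * q ^ (-m) + (z' - z₁) * q ^ (2 * a - m) = 0 := by
  have hs : q - q⁻¹ ≠ 0 := by
    rw [sub_ne_zero]
    intro h'
    apply hq2
    rw [sq]
    nth_rewrite 2 [h']
    exact mul_inv_cancel₀ hq
  have hqa : q ^ a ≠ 0 := zpow_ne_zero _ hq
  have hqm : q ^ m ≠ 0 := zpow_ne_zero _ hq
  unfold qint at h
  simp only [zpow_sub₀ hq, zpow_neg, neg_sub, two_mul, zpow_add₀ hq] at h ⊢
  field_simp at h ⊢
  linear_combination h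

/-- if `−z₁ [rA] q^{r(A−M)} + z_n [rM] = z' q^{rA} [r(M−A)]`
holds for all nonzero integers `r` (with `q` not a root of unity and
`0 < A < M`), then `z₁ = z_n = z'`. -/
theorem stmt_13 (q : ℂ) (hq : q ≠ 0) (hroot : ∀ n : ℕ, 0 < n → q ^ n ≠ 1)
    (A M : ℤ) (hA : 0 < A) (hAM : A < M)
    (z₁ zn z' : ℂ)
    (h : ∀ r : ℤ, r ≠ 0 →
      -z₁ * qint q (r * A) * q ^ (r * (A - M)) + zn * qint q (r * M)
        = z' * q ^ (r * A) * qint q (r * (M - A))) :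
    z₁ = zn ∧ zn = z' := by
  have hinj : Function.Injective fun n : ℤ => q ^ n :=
    injective_zpow_of_not_isOfFinOrder₀ hq fun hfin => by
      obtain ⟨n, hn, hqn⟩ := isOfFinOrder_iff_pow_eq_one.mp hfin
      exact hroot n hn hqn
  have hsum (r : ℤ) (hr : r ≠ 0) : (zn - z') * (q ^ M) ^ r + (z₁ - zn) * (q ^ (-M)) ^ r
      + (z' - z₁) * (q ^ (2 * A - M)) ^ r = 0 := by
    have hr' := h r hr
    rw [mul_sub, mul_sub] at hr'
    convert sum_zpow_eq_zero_of_qint_identity hq (hroot 2 two_pos) hr' using 3 <;>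
      rw [← zpow_mul] <;> ring_nf
  have h₁ := hsum 1 one_ne_zero
  have h₂ := hsum 2 two_ne_zero
  simp only [zpow_ofNat, pow_one] at h₁ h₂
  have hMv : M ≠ -M := by omega
  have hMw : M ≠ 2 * A - M := by omega
  have hvw : -M ≠ 2 * A - M := by omega
  have hc₁ := eq_zero_of_weighted_power_sums_eq_zero (hinj.ne hMv) (hinj.ne hMw) (by ring) h₁ h₂
  have hc₂ := eq_zero_of_weighted_power_sums_eq_zero (a := z₁ - zn) (b := zn - z') (c := z' - z₁)
    (hinj.ne hMv.symm) (hinj.ne hvw) (by ring) (by linear_combination h₁) (by linear_combination h₂)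
  exact ⟨by linear_combination hc₂, by linear_combination hc₁⟩
end

section
/- In an associative algebra with elements x_r^- (r ∈ ℤ) satisfying the relation x_r^- x_ℓ^- − q^{2} x_ℓ^- x_r^- = q^{2} x_{r−1}^- x_{ℓ+1}^- − x_{ℓ+1}^- x_{r−1}^- for all r, ℓ ∈ ℤ (the sl_2 loop relation with i = j), suppose w is a vector in a module such that x_r^- w ∈ ℂ x_0^- w for all r ∈ ℤ. Then the submodule spanned by all monomials x_{s_1}^- ··· x_{s_k}^- w (fixed k) equals the span of (x_0^-)^k w; i.e., every monomial of length k in the x_r^- applied to w is a scalar multiple of (x_0^-)^k w. -/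
/-!
Write `u = x₀ • v`. If every `x_r • v` lies on the line `K ∙ u`, say `x_r • v = d_r • u`, then the
loop relation applied to `v` becomes a linear relation among the vectors `A_r = x_r • u`.
Modulo the line `K ∙ A₀` it reads `2 A₁ ≡ 0` for `(r, ℓ) = (1, 0)` and `A_r ≡ t d₁ A_{r-1}` for
`(r, 0)`, so every `A_r` lies on `K ∙ A₀`: the line property passes from `v` to `x₀ • v`, hence to
every `x₀ᵐ • w`, and the monomials follow by induction on their length.
-/

open Submodule

section LinearAlgebra

variable {K V : Type*} [Field K] [AddCommGroup V] [Module K V]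

theorem eq_zero_of_eq_smul_sub_one {B : ℤ → V} {c : K} (h0 : B 0 = 0)
    (h : ∀ r, B r = c • B (r - 1)) (r : ℤ) : B r = 0 := by
  rcases eq_or_ne c 0 with rfl | hc
  · simpa using h r
  induction r using Int.induction_on with
  | zero => exact h0
  | succ n ih => simpa [ih] using h (n + 1)
  | pred n ih =>
    have h' := h (-n)
    rw [ih, eq_comm, smul_eq_zero] at h'
    exact h'.resolve_left hc

theorem mem_span_singleton_of_loop_relation [NeZero (2 : K)] {A : ℤ → V} {d : ℤ → K} {t : K}
    (hd0 : d 0 = 1)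
    (hrel : ∀ r ℓ, d ℓ • A r - (t * d r) • A ℓ
      = (t * d (ℓ + 1)) • A (r - 1) - d (r - 1) • A (ℓ + 1))
    (r : ℤ) : A r ∈ K ∙ A 0 := by
  set B : ℤ → V ⧸ K ∙ A 0 := fun r => (K ∙ A 0).mkQ (A r)
  have hB0 : B 0 = 0 := (Quotient.mk_eq_zero _).mpr (mem_span_singleton_self _)
  have hrelB : ∀ r ℓ, d ℓ • B r - (t * d r) • B ℓ
      = (t * d (ℓ + 1)) • B (r - 1) - d (r - 1) • B (ℓ + 1) := fun r ℓ => by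
    simpa only [map_sub, map_smul] using congrArg (K ∙ A 0).mkQ (hrel r ℓ)
  have hB1 : B 1 = 0 := by
    have h := hrelB 1 0
    simp only [hd0, hB0, sub_self, zero_add, one_smul, smul_zero, sub_zero, zero_sub] at h
    have h2 : (2 : K) • B 1 = 0 := by rw [two_smul, eq_neg_iff_add_eq_zero.mp h]
    exact (smul_eq_zero.mp h2).resolve_left two_ne_zero
  have hstep : ∀ r, B r = (t * d 1) • B (r - 1) := fun r => by
    simpa [hd0, hB0, hB1] using hrelB r 0
  exact (Quotient.mk_eq_zero _).mp (eq_zero_of_eq_smul_sub_one hB0 hstep r)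

end LinearAlgebra

section LoopAlgebra

def LoopRelation {K R : Type*} [CommRing K] [Ring R] [Algebra K R] (t : K) (x : ℤ → R) : Prop :=
  ∀ r ℓ, x r * x ℓ - t • (x ℓ * x r) = t • (x (r - 1) * x (ℓ + 1)) - x (ℓ + 1) * x (r - 1)

variable {K R M : Type*} [Field K] [NeZero (2 : K)] [Ring R] [Algebra K R]
  [AddCommGroup M] [Module K M] [Module R M] [IsScalarTower K R M]
  {t : K} {x : ℤ → R}

theorem smul_mem_span_singleton_smul_of_loop_relation
    (hrel : LoopRelation t x)
    {v : M} (hv : ∀ r, x r • v ∈ K ∙ (x 0 • v)) (r : ℤ) :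
    x r • x 0 • v ∈ K ∙ (x 0 • x 0 • v) := by
  generalize hu : x 0 • v = u at hv ⊢
  choose d hd using fun r => mem_span_singleton.mp (hv r)
  set d' := Function.update d 0 1
  have hd' : ∀ r, x r • v = d' r • u := fun r => by
    rcases eq_or_ne r 0 with rfl | hr
    · simp [d', hu]
    · simp [d', hr, hd r]
  have hxx : ∀ r ℓ, x r • x ℓ • v = d' ℓ • x r • u := fun r ℓ => by rw [hd', smul_comm]
  refine mem_span_singleton_of_loop_relation (A := fun r => x r • u) (d := d') (t := t)
    (Function.update_self ..) (fun r ℓ => ?_) r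
  have h := congrArg (· • v) (hrel r ℓ)
  simp only [sub_smul, mul_smul, smul_assoc, hxx] at h
  simpa only [smul_smul] using h

theorem smul_pow_mem_span_singleton_of_loop_relation
    (hrel : LoopRelation t x)
    {w : M} (hw : ∀ r, x r • w ∈ K ∙ (x 0 • w)) (m : ℕ) (r : ℤ) :
    x r • x 0 ^ m • w ∈ K ∙ (x 0 ^ (m + 1) • w) := by
  induction m generalizing r with
  | zero => simpa using hw r
  | succ m ih =>
    simp only [pow_succ', mul_smul] at ih ⊢
    exact smul_mem_span_singleton_smul_of_loop_relation hrel ih r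

theorem list_prod_smul_mem_span_singleton_of_loop_relation
    (hrel : LoopRelation t x)
    {w : M} (hw : ∀ r, x r • w ∈ K ∙ (x 0 • w)) (l : List ℤ) :
    (l.map x).prod • w ∈ K ∙ (x 0 ^ l.length • w) := by
  induction l with
  | nil => simp
  | cons r l ih =>
    obtain ⟨c, hc⟩ := mem_span_singleton.mp ih
    rw [List.map_cons, List.prod_cons, mul_smul, ← hc, smul_comm]
    exact smul_mem _ _ (smul_pow_mem_span_singleton_of_loop_relation hrel hw _ r)

end LoopAlgebra

theorem stmt_14_general (q : ℂ)
    (R : Type*) [Ring R] [Algebra ℂ R] (x : ℤ → R)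
    (hrel : ∀ r ℓ : ℤ,
      x r * x ℓ - q ^ (-2 : ℤ) • (x ℓ * x r)
        = q ^ (-2 : ℤ) • (x (r - 1) * x (ℓ + 1)) - x (ℓ + 1) * x (r - 1))
    (M : Type*) [AddCommGroup M] [Module R M]
    (w : M)
    (hw : ∀ r : ℤ, ∃ c : ℂ, x r • w = algebraMap ℂ R c • (x 0 • w)) :
    ∀ (k : ℕ) (s : Fin k → ℤ), ∃ c : ℂ,
      (List.ofFn fun i => x (s i)).prod • w = algebraMap ℂ R c • ((x 0) ^ k • w) := by
  let _ : Module ℂ M := Module.compHom M (algebraMap ℂ R)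
  have : IsScalarTower ℂ R M := IsScalarTower.of_compHom ℂ R M
  intro k s
  have hw' : ∀ r, x r • w ∈ ℂ ∙ (x 0 • w) := fun r =>
    let ⟨c, hc⟩ := hw r; mem_span_singleton.mpr ⟨c, hc.symm⟩
  obtain ⟨c, hc⟩ := mem_span_singleton.mp
    (list_prod_smul_mem_span_singleton_of_loop_relation hrel hw' (List.ofFn s))
  rw [List.map_ofFn, List.length_ofFn] at hc
  exact ⟨c, hc.symm⟩

/-- in an associative `ℂ`-algebra with elements `x_r` (`r ∈ ℤ`)
satisfying the `sl₂` loop relation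
`x_r x_ℓ − q^{−2} x_ℓ x_r = q^{−2} x_{r−1} x_{ℓ+1} − x_{ℓ+1} x_{r−1}`,
if `w` is a vector of a module with `x_r • w ∈ ℂ (x_0 • w)` for all `r`, then
every length-`k` monomial `x_{s_1} ⋯ x_{s_k} • w` is a scalar multiple of
`x_0^k • w`. -/
theorem stmt_14 (q : ℂ) (hq : q ≠ 0) (hroot : ∀ n : ℕ, 0 < n → q ^ n ≠ 1)
    (R : Type*) [Ring R] [Algebra ℂ R] (x : ℤ → R)
    (hrel : ∀ r ℓ : ℤ,
      x r * x ℓ - q ^ (-2 : ℤ) • (x ℓ * x r)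
        = q ^ (-2 : ℤ) • (x (r - 1) * x (ℓ + 1)) - x (ℓ + 1) * x (r - 1))
    (M : Type*) [AddCommGroup M] [Module R M]
    (w : M)
    (hw : ∀ r : ℤ, ∃ c : ℂ, x r • w = algebraMap ℂ R c • (x 0 • w)) :
    ∀ (k : ℕ) (s : Fin k → ℤ), ∃ c : ℂ,
      (List.ofFn fun i => x (s i)).prod • w = algebraMap ℂ R c • ((x 0) ^ k • w) :=
  stmt_14_general q R x hrel M w hw
end
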